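/- Invariance of a modified polytope via sensitivity: for each k ∈ K, suppose (t_k*, λ_k*) is a feasible point of the facet-k LP for P — i.e. λ_{k,i}* ≥ 0 for all i ∈ K∖{k} and t_k* ≤ q_k(v̄) + Σ_{i∈K} λ_{k,i}*(a_i'·v̄ − b_i) for all v̄ ∈ V̄', where q_k is the blossom of x ↦ −a_k·f(x). Let α ∈ ℝ^{m_K} be such that t_k* − λ_k*·α ≥ 0 for all k ∈ K, and such that the perturbed polytope P_α = {x ∈ ℝ^n : a_k·x ≤ b_k + α_k, ∀k ∈ K} satisfies P_α ⊆ R and has all its facets nonempty. Then P_α is an invariant set of ẋ = f(x): every differentiable curve x : [0,∞) → ℝ^n with x(0) ∈ P_α and x'(t) = f(x(t)) for all t ≥ 0 satisfies x(t) ∈ P_α for all t ≥ 0. -/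

import Mathlib

open Finset

/-- The normalized elementary symmetric polynomial
`B_{l,δ}(z) = binom(δ,l)⁻¹ ∑_{1≤σ₁<⋯<σ_l≤δ} z_{σ₁}⋯z_{σ_l}`. -/
noncomputable def normEsymm (δ l : ℕ) (z : Fin δ → ℝ) : ℝ :=
  ((δ.choose l : ℝ))⁻¹ * ∑ s ∈ Finset.powersetCard l (Finset.univ : Finset (Fin δ)),
    ∏ i ∈ s, z i

/-- The polynomial `p(x) = ∑_{l ∈ Δ} c_l x₁^{l₁}⋯x_n^{l_n}` with coefficients `c`,
where `Δ = {0,…,δ₁} × ⋯ × {0,…,δ_n}`. -/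
noncomputable def polyOf {n : ℕ} {δ : Fin n → ℕ} (c : (∀ k, Fin (δ k + 1)) → ℝ)
    (x : Fin n → ℝ) : ℝ :=
  ∑ l : ∀ k, Fin (δ k + 1), c l * ∏ k, x k ^ (l k : ℕ)

/-- The blossom `q(z) = ∑_{l ∈ Δ} c_l ∏_k B_{l_k,δ_k}(z_{k,1},…,z_{k,δ_k})` of the
polynomial with coefficients `c`. -/
noncomputable def blossomOf {n : ℕ} {δ : Fin n → ℕ} (c : (∀ k, Fin (δ k + 1)) → ℝ)
    (z : ∀ k, Fin (δ k) → ℝ) : ℝ :=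
  ∑ l : ∀ k, Fin (δ k + 1), c l * ∏ k, normEsymm (δ k) (l k) (z k)

/-- A function of the blocked variables `z = (z_{k,i})` is multi-affine if it is affine
(degree at most 1) in each single argument `z_{k,i}`. -/
def MultiAffineB {n : ℕ} (δ : Fin n → ℕ) (q : (∀ k, Fin (δ k) → ℝ) → ℝ) : Prop :=
  ∀ (k : Fin n) (i : Fin (δ k)) (z : ∀ k, Fin (δ k) → ℝ) (s t θ : ℝ),
    q (Function.update z k (Function.update (z k) i (θ * s + (1 - θ) * t)))
      = θ * q (Function.update z k (Function.update (z k) i s))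
        + (1 - θ) * q (Function.update z k (Function.update (z k) i t))

/-- `z ≅ z'` : each block of `z` is a permutation of the corresponding block of `z'`. -/
def BlockRel {n : ℕ} (δ : Fin n → ℕ) (z z' : ∀ k, Fin (δ k) → ℝ) : Prop :=
  ∀ k, ∃ π : Equiv.Perm (Fin (δ k)), ∀ i, z k i = z' k (π i)


/-- Euclidean dot product on `ℝ^n`. -/
def dotp {n : ℕ} (u x : Fin n → ℝ) : ℝ := ∑ k, u k * x k

/-- The lifted linear form: for `w ∈ ℝ^n`, `w' · z = ∑_k ∑_i (w k / δ k) * z k i`. -/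
noncomputable def aLift {n : ℕ} (δ : Fin n → ℕ) (w : Fin n → ℝ)
    (z : ∀ k, Fin (δ k) → ℝ) : ℝ :=
  ∑ k, ∑ i : Fin (δ k), (w k / (δ k : ℝ)) * z k i

/-- The canonical representative of the equivalence class of vertices of `R'` whose
`k`-th block has exactly `ℓ k` coordinates equal to `hi k`. -/
noncomputable def vrep {n : ℕ} (δ : Fin n → ℕ) (lo hi : Fin n → ℝ)
    (ℓ : ∀ k, Fin (δ k + 1)) (k : Fin n) (i : Fin (δ k)) : ℝ :=
  if (i : ℕ) < (ℓ k : ℕ) then hi k else lo k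

/-!
For each facet `k`, the Lagrangian `z ↦ q_k(z) + ∑ᵢ λ_{k,i} (a_i'·z − b_i)` of the facet LP
is multi-affine, so its minimum over the lifted box is attained at a vertex; block symmetry
reduces the vertices to the representatives `vrep`, and evaluating on the diagonal
`z = (x,…,x)` turns LP feasibility into `t_k* ≤ −a_k·f(x) + ∑ᵢ λ_{k,i} (a_i·x − b_i)` on `R`.
At a point of an active facet of `P_α`, the terms `i ≠ k` are `≤ λ_{k,i} α_i` and the term
`i = k` equals `λ_{k,k} α_k`, so `t_k* − λ_k*·α ≥ 0` gives `a_k·f(x) ≤ 0`: short Euler steps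
`x + h f(x)` stay in `P_α`. Invariance then follows as in Nagumo's theorem: since `f` is
Lipschitz on bounded sets, the distance from the trajectory to `P_α` satisfies a Grönwall
inequality with initial value `0`.
-/

open Filter Topology Metric NNReal

theorem le_of_forall_vertex_le {ι : Type*} [Fintype ι] [DecidableEq ι] {lo hi : ι → ℝ}
    {Q : (ι → ℝ) → ℝ}
    (hQ : ∀ j z s t θ, Q (Function.update z j (θ * s + (1 - θ) * t))
      = θ * Q (Function.update z j s) + (1 - θ) * Q (Function.update z j t))
    {c : ℝ} (hvert : ∀ z, (∀ j, z j = lo j ∨ z j = hi j) → c ≤ Q z)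
    {z : ι → ℝ} (hz : ∀ j, z j ∈ Set.Icc (lo j) (hi j)) : c ≤ Q z := by
  suffices H : ∀ S : Finset ι, ∀ z : ι → ℝ, (∀ j, z j ∈ Set.Icc (lo j) (hi j)) →
      (∀ j ∉ S, z j = lo j ∨ z j = hi j) → c ≤ Q z from
    H univ z hz (by simp)
  intro S
  induction S using Finset.induction_on with
  | empty => exact fun z _ hzS => hvert z fun j => hzS j (Finset.notMem_empty j)
  | insert j S _ ih =>
    intro z hz hzS
    have hupd : ∀ v, v = lo j ∨ v = hi j → c ≤ Q (Function.update z j v) := by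
      intro v hv
      refine ih _ ((Function.forall_update_iff z fun j w => w ∈ Set.Icc (lo j) (hi j)).2
        ⟨?_, fun j' _ => hz j'⟩) ((Function.forall_update_iff z
          fun j w => j ∉ S → w = lo j ∨ w = hi j).2 ⟨fun _ => hv, fun j' hj' hj'S => ?_⟩)
      · rcases hv with rfl | rfl
        exacts [Set.left_mem_Icc.2 ((hz j).1.trans (hz j).2),
          Set.right_mem_Icc.2 ((hz j).1.trans (hz j).2)]
      · exact hzS j' (by simp [hj', hj'S])
    obtain ⟨θ, θ', hθ, hθ', hsum, hzj⟩ : z j ∈ segment ℝ (lo j) (hi j) := by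
      rw [segment_eq_Icc ((hz j).1.trans (hz j).2)]; exact hz j
    obtain rfl : θ' = 1 - θ := by linarith
    calc c = θ * c + (1 - θ) * c := by ring
      _ ≤ θ * Q (Function.update z j (lo j)) + (1 - θ) * Q (Function.update z j (hi j)) := by
        gcongr
        exacts [hupd _ (Or.inl rfl), hupd _ (Or.inr rfl)]
      _ = Q z := by
        rw [← hQ, ← smul_eq_mul, ← smul_eq_mul (1 - θ), hzj, Function.update_eq_self]

theorem MultiAffineB.le_of_forall_vertex_le {n : ℕ} {δ : Fin n → ℕ} {lo hi : Fin n → ℝ}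
    {Q : (∀ k, Fin (δ k) → ℝ) → ℝ} (hQ : MultiAffineB δ Q) {c : ℝ}
    (hvert : ∀ z : ∀ k, Fin (δ k) → ℝ, (∀ k i, z k i = lo k ∨ z k i = hi k) → c ≤ Q z)
    {z : ∀ k, Fin (δ k) → ℝ} (hz : ∀ k i, z k i ∈ Set.Icc (lo k) (hi k)) : c ≤ Q z :=
  _root_.le_of_forall_vertex_le (lo := fun p : Σ k, Fin (δ k) => lo p.1)
    (hi := fun p => hi p.1) (Q := fun w => Q (Sigma.curry w))
    (fun p w s t θ => by simpa only [Sigma.curry_update] using hQ p.1 p.2 (Sigma.curry w) s t θ)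
    (fun w hw => hvert _ fun k i => hw ⟨k, i⟩) (z := Sigma.uncurry z) fun p => hz p.1 p.2

namespace MultiAffineB

variable {n : ℕ} {δ : Fin n → ℕ} {Q R : (∀ k, Fin (δ k) → ℝ) → ℝ}

theorem add (hQ : MultiAffineB δ Q) (hR : MultiAffineB δ R) :
    MultiAffineB δ fun z => Q z + R z := by
  intro k i z s t θ
  dsimp only
  rw [hQ, hR]
  ring

theorem const_mul (hQ : MultiAffineB δ Q) (c : ℝ) : MultiAffineB δ fun z => c * Q z := by
  intro k i z s t θ
  dsimp only
  rw [hQ]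
  ring

theorem sub_const (hQ : MultiAffineB δ Q) (c : ℝ) : MultiAffineB δ fun z => Q z - c := by
  intro k i z s t θ
  dsimp only
  rw [hQ]
  ring

theorem sum {ι : Type*} (S : Finset ι) {Q : ι → (∀ k, Fin (δ k) → ℝ) → ℝ}
    (hQ : ∀ i ∈ S, MultiAffineB δ (Q i)) : MultiAffineB δ fun z => ∑ i ∈ S, Q i z := by
  intro k j z s t θ
  dsimp only
  rw [Finset.sum_congr rfl fun i hi => hQ i hi k j z s t θ, Finset.sum_add_distrib,
    Finset.mul_sum, Finset.mul_sum]

end MultiAffineB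

theorem update_update_convex_comb {n : ℕ} {δ : Fin n → ℕ} (z : ∀ k, Fin (δ k) → ℝ)
    (k : Fin n) (i : Fin (δ k)) (s t θ : ℝ) :
    Function.update z k (Function.update (z k) i (θ * s + (1 - θ) * t))
      = θ • Function.update z k (Function.update (z k) i s)
        + (1 - θ) • Function.update z k (Function.update (z k) i t) := by
  ext k' i'
  rcases eq_or_ne k' k with rfl | hk
  · rcases eq_or_ne i' i with rfl | hi
    · simp
    · simp [hi]
      ring
  · simp [hk]
    ring

theorem aLift_add {n : ℕ} (δ : Fin n → ℕ) (w : Fin n → ℝ) (u v : ∀ k, Fin (δ k) → ℝ) :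
    aLift δ w (u + v) = aLift δ w u + aLift δ w v := by
  simp only [aLift, Pi.add_apply, mul_add, Finset.sum_add_distrib]

theorem aLift_smul {n : ℕ} (δ : Fin n → ℕ) (w : Fin n → ℝ) (c : ℝ) (u : ∀ k, Fin (δ k) → ℝ) :
    aLift δ w (c • u) = c * aLift δ w u := by
  simp only [aLift, Pi.smul_apply, smul_eq_mul, Finset.mul_sum]
  exact Finset.sum_congr rfl fun _ _ => Finset.sum_congr rfl fun _ _ => by ring

theorem multiAffineB_aLift {n : ℕ} (δ : Fin n → ℕ) (w : Fin n → ℝ) :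
    MultiAffineB δ (aLift δ w) := by
  intro k i z s t θ
  rw [update_update_convex_comb, aLift_add, aLift_smul, aLift_smul]

theorem aLift_const {n : ℕ} {δ : Fin n → ℕ} (hδ : ∀ j, δ j ≠ 0) (w x : Fin n → ℝ) :
    aLift δ w (fun j _ => x j) = dotp w x := by
  refine Finset.sum_congr rfl fun k _ => ?_
  have : (δ k : ℝ) ≠ 0 := Nat.cast_ne_zero.2 (hδ k)
  rw [Finset.sum_const, Finset.card_univ, Fintype.card_fin, nsmul_eq_mul]
  field_simp

theorem aLift_eq_of_blockRel {n : ℕ} {δ : Fin n → ℕ} (w : Fin n → ℝ)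
    {z z' : ∀ k, Fin (δ k) → ℝ} (h : BlockRel δ z z') : aLift δ w z = aLift δ w z' := by
  refine Finset.sum_congr rfl fun k _ => ?_
  obtain ⟨π, hπ⟩ := h k
  simp only [hπ]
  exact Equiv.sum_comp π fun i => w k / δ k * z' k i

theorem exists_perm_eq_ite_lt {d : ℕ} (g : Fin d → ℝ) (lo hi : ℝ)
    (hg : ∀ i, g i = lo ∨ g i = hi) :
    ∃ π : Equiv.Perm (Fin d), ∀ i,
      g i = if ((π i : Fin d) : ℕ) < #{i | g i = hi} then hi else lo := by
  obtain ⟨π, hπ⟩ := Equiv.Perm.exists_map_finset_eq {i | g i = hi}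
    {i : Fin d | i < #{i | g i = hi}} (by
      rw [Fin.card_filter_val_lt, min_eq_right ((card_le_univ _).trans_eq (Fintype.card_fin d))])
  refine ⟨π, fun i => ?_⟩
  have hmem : (π i : ℕ) < #{i | g i = hi} ↔ g i = hi := by
    have h := Finset.mem_map_equiv (f := π) (b := π i) (s := {i | g i = hi})
    rw [hπ] at h
    simpa using h
  split_ifs with h
  · exact hmem.1 h
  · exact (hg i).resolve_right (mt hmem.2 h)

theorem exists_blockRel_vrep {n : ℕ} {δ : Fin n → ℕ} (lo hi : Fin n → ℝ)
    {z : ∀ k, Fin (δ k) → ℝ} (hz : ∀ k i, z k i = lo k ∨ z k i = hi k) :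
    ∃ ℓ : ∀ k, Fin (δ k + 1), BlockRel δ z (vrep δ lo hi ℓ) := by
  refine ⟨fun k => ⟨#{i | z k i = hi k}, Nat.lt_succ_of_le ?_⟩, fun k => ?_⟩
  · exact (card_le_univ _).trans_eq (Fintype.card_fin _)
  · exact exists_perm_eq_ite_lt (z k) (lo k) (hi k) (hz k)

theorem le_lagrangian_of_mem_box {n m : ℕ} {δ : Fin n → ℕ} (hδ : ∀ j, δ j ≠ 0)
    {lo hi : Fin n → ℝ} {q : (∀ j, Fin (δ j) → ℝ) → ℝ} (hqma : MultiAffineB δ q)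
    (hqsym : ∀ z z', BlockRel δ z z' → q z = q z') {g : (Fin n → ℝ) → ℝ}
    (hqdiag : ∀ x, q (fun j _ => x j) = g x) (a : Fin m → Fin n → ℝ) (b lam : Fin m → ℝ)
    {t : ℝ} (hfeas : ∀ ℓ : ∀ j, Fin (δ j + 1),
      t ≤ q (vrep δ lo hi ℓ) + ∑ i, lam i * (aLift δ (a i) (vrep δ lo hi ℓ) - b i))
    {y : Fin n → ℝ} (hy : ∀ j, y j ∈ Set.Icc (lo j) (hi j)) :
    t ≤ g y + ∑ i, lam i * (dotp (a i) y - b i) := by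
  have hL : MultiAffineB δ fun z => q z + ∑ i, lam i * (aLift δ (a i) z - b i) :=
    hqma.add <| MultiAffineB.sum _ fun i _ =>
      ((multiAffineB_aLift δ (a i)).sub_const (b i)).const_mul (lam i)
  have hbox := hL.le_of_forall_vertex_le (c := t) (z := fun j _ => y j) (fun z hz => ?_)
    fun k _ => hy k
  · simpa only [hqdiag, aLift_const hδ] using hbox
  · obtain ⟨ℓ, hℓ⟩ := exists_blockRel_vrep lo hi hz
    simpa only [hqsym _ _ hℓ, aLift_eq_of_blockRel _ hℓ] using hfeas ℓ

section Invariance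

variable {E : Type*} [NormedAddCommGroup E] [NormedSpace ℝ E] {P : Set E} {f : E → E}
  {x : ℝ → E}

theorem infDist_add_smul_le {p w : E} {h : ℝ} (hh : 0 ≤ h) (hp : p + h • w ∈ P) (y v : E) :
    infDist (y + h • v) P ≤ dist y p + h * ‖v - w‖ := by
  refine (infDist_le_dist_of_mem hp).trans ?_
  rw [dist_eq_norm, dist_eq_norm,
    show y + h • v - (p + h • w) = (y - p) + h • (v - w) by rw [smul_sub]; abel]
  calc ‖(y - p) + h • (v - w)‖ ≤ ‖y - p‖ + ‖h • (v - w)‖ := norm_add_le _ _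
    _ = ‖y - p‖ + h * ‖v - w‖ := by rw [norm_smul, Real.norm_of_nonneg hh]

theorem tendsto_sub_nhdsGT_zero (s : ℝ) : Tendsto (fun z => z - s) (𝓝[>] s) (𝓝[>] 0) :=
  tendsto_nhdsWithin_of_tendsto_nhds_of_eventually_within _
    (tendsto_nhdsWithin_of_tendsto_nhds (by simpa using (continuous_sub_right s).tendsto s))
    (eventually_nhdsWithin_of_forall fun _ hz => Set.mem_Ioi.2 (sub_pos.2 hz))

theorem frequently_slope_infDist_lt {s K r : ℝ} {p : E}
    (hp : dist (x s) p = infDist (x s) P) (hLip : dist (f (x s)) (f p) ≤ K * dist (x s) p)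
    (hsub : ∀ᶠ h : ℝ in 𝓝[>] 0, p + h • f p ∈ P)
    (hx : HasDerivWithinAt x (f (x s)) (Set.Ici s) s) (hr : K * infDist (x s) P < r) :
    ∃ᶠ z in 𝓝[>] s, (z - s)⁻¹ * (infDist (x z) P - infDist (x s) P) < r := by
  set ε := r - K * infDist (x s) P
  have hε : 0 < ε := sub_pos.2 hr
  have hslope : Tendsto (slope x s) (𝓝[>] s) (𝓝 (f (x s))) :=
    (hasDerivWithinAt_iff_tendsto_slope' (lt_irrefl s)).1 (hx.mono Set.Ioi_subset_Ici_self)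
  refine Eventually.frequently ?_
  filter_upwards [hslope (ball_mem_nhds _ (half_pos hε)), tendsto_sub_nhdsGT_zero s hsub,
    self_mem_nhdsWithin] with z hz hzP (hzs : s < z)
  have hh : 0 < z - s := sub_pos.2 hzs
  have hnorm : ‖slope x s z - f p‖ ≤ ε / 2 + K * infDist (x s) P := by
    rw [← hp, ← dist_eq_norm]
    exact (dist_triangle _ (f (x s)) _).trans (add_le_add (mem_ball.1 hz).le hLip)
  have hstep := infDist_add_smul_le hh.le hzP (x s) (slope x s z)
  rw [add_comm, ← vadd_eq_add, sub_smul_slope_vadd, hp] at hstep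
  rw [inv_mul_lt_iff₀ hh]
  calc infDist (x z) P - infDist (x s) P ≤ (z - s) * ‖slope x s z - f p‖ := by linarith
    _ ≤ (z - s) * (ε / 2 + K * infDist (x s) P) := by gcongr
    _ < (z - s) * r := by gcongr; linarith

theorem mapsTo_Icc_of_forall_eventually_add_smul_mem [ProperSpace E] (hP : IsClosed P)
    (hsub : ∀ p ∈ P, ∀ᶠ h : ℝ in 𝓝[>] 0, p + h • f p ∈ P) {K : ℝ≥0} {a b r : ℝ}
    (hf : LipschitzOnWith K f (closedBall (x a) (2 * r)))
    (hxr : Set.MapsTo x (Set.Icc a b) (closedBall (x a) r))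
    (hxc : ContinuousOn x (Set.Icc a b))
    (hx : ∀ s ∈ Set.Ico a b, HasDerivWithinAt x (f (x s)) (Set.Ici s) s) (ha : x a ∈ P) :
    Set.MapsTo x (Set.Icc a b) P := by
  have hne : P.Nonempty := ⟨_, ha⟩
  have hslope : ∀ s ∈ Set.Ico a b, ∀ r', K * infDist (x s) P < r' →
      ∃ᶠ z in 𝓝[>] s, (z - s)⁻¹ * (infDist (x z) P - infDist (x s) P) < r' := by
    intro s hs r' hr'
    obtain ⟨p, hpP, hp⟩ := hP.exists_infDist_eq_dist hne (x s)
    have hxs : dist (x s) (x a) ≤ r := hxr (Set.Ico_subset_Icc_self hs)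
    have hps : dist (x s) p ≤ r := hp ▸ (infDist_le_dist_of_mem ha).trans hxs
    have hpa : dist p (x a) ≤ 2 * r := by
      linarith [dist_triangle p (x s) (x a), dist_comm p (x s)]
    have hxsa : dist (x s) (x a) ≤ 2 * r := by linarith [dist_nonneg (x := x s) (y := p)]
    exact frequently_slope_infDist_lt hp.symm (hf.dist_le_mul _ hxsa _ hpa) (hsub p hpP)
      (hx s hs) hr'
  have hgronwall := le_gronwallBound_of_liminf_deriv_right_le (δ := 0) (ε := 0)
    ((continuous_infDist_pt P).comp_continuousOn hxc) hslope
    (by simp [infDist_zero_of_mem ha]) fun _ _ => le_of_eq (add_zero _).symm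
  intro s hs
  rw [hP.mem_iff_infDist_zero hne]
  exact le_antisymm ((hgronwall s hs).trans_eq (gronwallBound_ε0_δ0 _ _)) infDist_nonneg

theorem mapsTo_Ici_of_forall_eventually_add_smul_mem [ProperSpace E] (hP : IsClosed P)
    (hf : LocallyLipschitz f) (hsub : ∀ p ∈ P, ∀ᶠ h : ℝ in 𝓝[>] 0, p + h • f p ∈ P)
    (hx : ∀ t ∈ Set.Ici (0 : ℝ), HasDerivWithinAt x (f (x t)) (Set.Ici 0) t) (h0 : x 0 ∈ P) :
    Set.MapsTo x (Set.Ici 0) P := by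
  intro t ht
  have hxc : ContinuousOn x (Set.Icc 0 t) := fun s hs =>
    (hx s hs.1).continuousWithinAt.mono Set.Icc_subset_Ici_self
  obtain ⟨r, hr⟩ := (isCompact_Icc.image_of_continuousOn hxc).isBounded.subset_closedBall (x 0)
  obtain ⟨K, hK⟩ := hf.locallyLipschitzOn.exists_lipschitzOnWith_of_compact
    (isCompact_closedBall (x 0) (2 * r))
  exact mapsTo_Icc_of_forall_eventually_add_smul_mem hP hsub hK
    ((Set.mapsTo_image x _).mono_right hr) hxc
    (fun s hs => (hx s hs.1).mono (Set.Ici_subset_Ici.2 hs.1)) h0 ⟨ht, le_rfl⟩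

end Invariance

theorem locallyLipschitz_of_forall_eq_eval {σ ι : Type*} [Fintype σ] [Fintype ι]
    {f : (σ → ℝ) → ι → ℝ}
    (hf : ∀ j, ∃ F : MvPolynomial σ ℝ, ∀ x, f x j = MvPolynomial.eval x F) :
    LocallyLipschitz f := by
  choose F hF using hf
  have hfF : f = fun x j => MvPolynomial.eval x (F j) := funext fun x => funext fun j => hF j x
  have hC : ContDiff ℝ 1 f := by
    rw [hfF]
    exact contDiff_pi.2 fun j => (AnalyticOnNhd.eval_mvPolynomial (F j)).contDiff
  exact hC.locallyLipschitz

section Polytope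

variable {n m : ℕ} (a : Fin m → Fin n → ℝ) (c : Fin m → ℝ)

theorem dotp_add_smul (u p v : Fin n → ℝ) (h : ℝ) :
    dotp u (p + h • v) = dotp u p + h * dotp u v := by
  simp only [dotp, Pi.add_apply, Pi.smul_apply, smul_eq_mul, mul_add, Finset.sum_add_distrib,
    Finset.mul_sum, mul_left_comm h]

theorem isClosed_setOf_forall_dotp_le :
    IsClosed {y : Fin n → ℝ | ∀ k, dotp (a k) y ≤ c k} := by
  simp only [Set.ofPred_forall]
  exact isClosed_iInter fun k => isClosed_le (by unfold dotp; fun_prop) continuous_const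

variable {a c}

theorem eventually_forall_dotp_add_smul_le {p v : Fin n → ℝ} (hp : ∀ k, dotp (a k) p ≤ c k)
    (hv : ∀ k, dotp (a k) p = c k → dotp (a k) v ≤ 0) :
    ∀ᶠ h : ℝ in 𝓝[>] 0, ∀ k, dotp (a k) (p + h • v) ≤ c k := by
  refine Filter.eventually_all.2 fun k => ?_
  simp only [dotp_add_smul]
  rcases (hp k).eq_or_lt with hk | hk
  · filter_upwards [self_mem_nhdsWithin] with h (hh : 0 < h)
    nlinarith [hv k hk]
  · have hcont : Tendsto (fun h : ℝ => dotp (a k) p + h * dotp (a k) v) (𝓝[>] 0)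
        (𝓝 (dotp (a k) p)) :=
      tendsto_nhdsWithin_of_tendsto_nhds (Continuous.tendsto' (by fun_prop) 0 _ (by simp))
    exact (hcont.eventually (gt_mem_nhds hk)).mono fun _ => le_of_lt

theorem dotp_nonpos_of_le_lagrangian {b α lam : Fin m → ℝ} {t : ℝ} {k : Fin m}
    {p v : Fin n → ℝ} (hlam : ∀ i, i ≠ k → 0 ≤ lam i) (hα : 0 ≤ t - ∑ i, lam i * α i)
    (hp : ∀ i, dotp (a i) p ≤ b i + α i) (hk : dotp (a k) p = b k + α k)
    (ht : t ≤ -dotp (a k) v + ∑ i, lam i * (dotp (a i) p - b i)) : dotp (a k) v ≤ 0 := by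
  have hslack : ∑ i, lam i * (dotp (a i) p - (b i + α i)) ≤ 0 := by
    refine Finset.sum_nonpos fun i _ => ?_
    rcases eq_or_ne i k with rfl | hi
    · simp [hk]
    · exact mul_nonpos_of_nonneg_of_nonpos (hlam i hi) (sub_nonpos.2 (hp i))
  have hsplit : ∑ i, lam i * (dotp (a i) p - b i)
      = ∑ i, lam i * α i + ∑ i, lam i * (dotp (a i) p - (b i + α i)) := by
    rw [← Finset.sum_add_distrib]
    exact Finset.sum_congr rfl fun i _ => by ring
  linarith

end Polytope

theorem stmt_17_general {n mK : ℕ} (δ : Fin n → ℕ) (hδ : ∀ j, 1 ≤ δ j)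
    (lo hi : Fin n → ℝ)
    (f : (Fin n → ℝ) → (Fin n → ℝ))
    (hfpoly : ∀ j : Fin n, ∃ F : MvPolynomial (Fin n) ℝ,
      ∀ x : Fin n → ℝ, f x j = MvPolynomial.eval x F)
    (a : Fin mK → Fin n → ℝ) (b : Fin mK → ℝ)
    (q : Fin mK → ((∀ j, Fin (δ j) → ℝ) → ℝ))
    (hqma : ∀ k, MultiAffineB δ (q k))
    (hqsym : ∀ k, ∀ z z' : ∀ j, Fin (δ j) → ℝ, BlockRel δ z z' → q k z = q k z')
    (hqdiag : ∀ k, ∀ x : Fin n → ℝ, q k (fun j _ => x j) = -(dotp (a k) (f x)))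
    (tstar : Fin mK → ℝ) (lamstar : Fin mK → Fin mK → ℝ)
    (hlam : ∀ k i, i ≠ k → 0 ≤ lamstar k i)
    (hfeasLP : ∀ k, ∀ ℓ : ∀ j, Fin (δ j + 1),
      tstar k ≤ q k (vrep δ lo hi ℓ)
          + ∑ i, lamstar k i * (aLift δ (a i) (vrep δ lo hi ℓ) - b i))
    (α : Fin mK → ℝ)
    (hα : ∀ k, 0 ≤ tstar k - ∑ i, lamstar k i * α i)
    (hPαR : ∀ x : Fin n → ℝ, (∀ k, dotp (a k) x ≤ b k + α k) →
      ∀ j, x j ∈ Set.Icc (lo j) (hi j)) :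
    ∀ x : ℝ → (Fin n → ℝ),
      (∀ t ∈ Set.Ici (0 : ℝ), HasDerivWithinAt x (f (x t)) (Set.Ici 0) t) →
      (∀ k, dotp (a k) (x 0) ≤ b k + α k) →
      ∀ t : ℝ, 0 ≤ t → ∀ k, dotp (a k) (x t) ≤ b k + α k := by
  intro x hx hx0 t ht
  have hinward : ∀ p, (∀ i, dotp (a i) p ≤ b i + α i) →
      ∀ k, dotp (a k) p = b k + α k → dotp (a k) (f p) ≤ 0 := fun p hp k hk =>
    dotp_nonpos_of_le_lagrangian (hlam k) (hα k) hp hk <|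
      le_lagrangian_of_mem_box (fun j => Nat.one_le_iff_ne_zero.1 (hδ j)) (hqma k) (hqsym k)
        (hqdiag k) a b (lamstar k) (hfeasLP k) (hPαR p hp)
  exact mapsTo_Ici_of_forall_eventually_add_smul_mem (isClosed_setOf_forall_dotp_le a _)
    (locallyLipschitz_of_forall_eq_eval hfpoly)
    (fun p hp => eventually_forall_dotp_add_smul_le hp (hinward p hp)) hx hx0 ht

/-- Invariance of a modified polytope via sensitivity: if for each `k ∈ K` the pair
`(t_k*, λ_k*)` is feasible for the facet-`k` LP of `P` (where `q_k` is the blossom of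
`x ↦ −a_k·f(x)`), and `α ∈ ℝ^{m_K}` is such that `t_k* − λ_k*·α ≥ 0` for all `k`,
the perturbed polytope `P_α = {x | ∀ k, a_k·x ≤ b_k + α_k}` is contained in `R` and
has all facets nonempty, then `P_α` is an invariant set of `ẋ = f(x)`. -/
theorem stmt_17 {n mK : ℕ} (δ : Fin n → ℕ) (hδ : ∀ j, 1 ≤ δ j)
    (lo hi : Fin n → ℝ) (hlt : ∀ j, lo j < hi j)
    (f : (Fin n → ℝ) → (Fin n → ℝ))
    (hfpoly : ∀ j : Fin n, ∃ F : MvPolynomial (Fin n) ℝ,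
      ∀ x : Fin n → ℝ, f x j = MvPolynomial.eval x F)
    (a : Fin mK → Fin n → ℝ) (b : Fin mK → ℝ)
    (hPR : ∀ x : Fin n → ℝ, (∀ k, dotp (a k) x ≤ b k) →
      ∀ j, x j ∈ Set.Icc (lo j) (hi j))
    (q : Fin mK → ((∀ j, Fin (δ j) → ℝ) → ℝ))
    (hqma : ∀ k, MultiAffineB δ (q k))
    (hqsym : ∀ k, ∀ z z' : ∀ j, Fin (δ j) → ℝ, BlockRel δ z z' → q k z = q k z')
    (hqdiag : ∀ k, ∀ x : Fin n → ℝ, q k (fun j _ => x j) = -(dotp (a k) (f x)))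
    (tstar : Fin mK → ℝ) (lamstar : Fin mK → Fin mK → ℝ)
    (hlam : ∀ k i, i ≠ k → 0 ≤ lamstar k i)
    (hfeasLP : ∀ k, ∀ ℓ : ∀ j, Fin (δ j + 1),
      tstar k ≤ q k (vrep δ lo hi ℓ)
          + ∑ i, lamstar k i * (aLift δ (a i) (vrep δ lo hi ℓ) - b i))
    (α : Fin mK → ℝ)
    (hα : ∀ k, 0 ≤ tstar k - ∑ i, lamstar k i * α i)
    (hPαR : ∀ x : Fin n → ℝ, (∀ k, dotp (a k) x ≤ b k + α k) →
      ∀ j, x j ∈ Set.Icc (lo j) (hi j))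
    (hfacet : ∀ k, ∃ x : Fin n → ℝ,
      (∀ i, dotp (a i) x ≤ b i + α i) ∧ dotp (a k) x = b k + α k) :
    ∀ x : ℝ → (Fin n → ℝ),
      (∀ t ∈ Set.Ici (0 : ℝ), HasDerivWithinAt x (f (x t)) (Set.Ici 0) t) →
      (∀ k, dotp (a k) (x 0) ≤ b k + α k) →
      ∀ t : ℝ, 0 ≤ t → ∀ k, dotp (a k) (x t) ≤ b k + α k :=
  stmt_17_general δ hδ lo hi f hfpoly a b q hqma hqsym hqdiag tstar lamstar hlam hfeasLP α hα hPαR
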